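/- Let n ≥ 3, λ ≥ 0, 0 < μ < n − 2λ, 0 < p₀ < ∞, 0 < q₀ < ∞, and α, β ∈ ℝ with α < n − 1 and β < n. Let (u, v) be a pair of nonnegative solutions of the single-weighted integral system (S₁) with u continuously differentiable on ∂ℝⁿ₊ and v continuously differentiable on ℝⁿ₊, and assume ∫_{∂ℝⁿ₊} |y|^{−α} u(y)^{p₀+1} dy < ∞, ∫_{ℝⁿ₊} |x|^{−β} v(x)^{q₀+1} dx < ∞, and that the integrals ∫_{∂ℝⁿ₊} |y|^{−α} u(y)^{p₀} |y · ∇u(y)| dy and ∫_{ℝⁿ₊} |x|^{−β} v(x)^{q₀} |x · ∇v(x)| dx are finite. Then ∫_{∂ℝⁿ₊} |y|^{−α} u(y)^{p₀} (y · ∇u(y)) dy + ∫_{ℝⁿ₊} |x|^{−β} v(x)^{q₀} (x · ∇v(x)) dx = − ((n − 1 − α)/(p₀ + 1)) ∫_{∂ℝⁿ₊} |y|^{−α} u(y)^{p₀+1} dy − ((n − β)/(q₀ + 1)) ∫_{ℝⁿ₊} |x|^{−β} v(x)^{q₀+1} dx. -/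

import Mathlib

open MeasureTheory Real Set Filter Topology

noncomputable section

open Module

lemma rpow_const_measurable (c : ℝ) : Measurable (fun t : ℝ => t ^ c) :=
  measurable_of_continuousOn_compl_singleton 0 (fun x hx =>
    (Real.continuousAt_rpow_const x c (Or.inl hx)).continuousWithinAt)

section Generic

variable {E : Type*} [NormedAddCommGroup E] [NormedSpace ℝ E]
  [MeasurableSpace E] [BorelSpace E] [FiniteDimensional ℝ E]

lemma integral_comp_smul_pos (μ : Measure E) [μ.IsAddHaarMeasure] (f : E → ℝ) {s : ℝ}
    (hs : 0 < s) :
    ∫ x, f (s • x) ∂μ = s ^ (-(finrank ℝ E : ℝ)) * ∫ x, f x ∂μ := by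
  rw [Measure.integral_comp_smul μ f s, smul_eq_mul]
  congr 1
  rw [abs_of_nonneg (by positivity), Real.rpow_neg hs.le, Real.rpow_natCast]

lemma pohozaev_one (μ : Measure E) [μ.IsAddHaarMeasure]
    {α p : ℝ} (hα : α < (finrank ℝ E : ℝ)) (hp : 0 < p)
    (w : E → ℝ) (hwm : Measurable w) (hw0 : ∀ x, 0 ≤ w x)
    (hw : ∀ s : ℝ, 0 < s → ∀ x : E, w (s • x) = s ^ (-α) * w x)
    (U : Set E) (hUo : IsOpen U)
    (hUiff : ∀ s : ℝ, 0 < s → ∀ x : E, s • x ∈ U ↔ x ∈ U)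
    (u : E → ℝ) (hu0 : ∀ x ∈ U, 0 ≤ u x)
    (hureg : ContDiffOn ℝ 1 u U) (hud : ∀ x ∈ U, DifferentiableAt ℝ u x)
    (hint1 : IntegrableOn (fun x => w x * u x ^ (p + 1)) U μ)
    (hint2 : IntegrableOn (fun x => w x * u x ^ p * |fderiv ℝ u x x|) U μ) :
    ∫ x in U, w x * u x ^ p * fderiv ℝ u x x ∂μ
      = ((α - (finrank ℝ E : ℝ)) / (p + 1)) * ∫ x in U, w x * u x ^ (p + 1) ∂μ := by
  obtain ⟨d, hd⟩ : ∃ d : ℝ, d = (finrank ℝ E : ℝ) := ⟨_, rfl⟩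
  rw [← hd] at hα ⊢
  have hαd : α - d ≠ 0 := sub_ne_zero.2 (ne_of_lt hα)
  have hp1 : p + 1 ≠ 0 := by positivity
  have hUm : MeasurableSet U := hUo.measurableSet
  set F : E → ℝ := fun z => w z * u z ^ p * fderiv ℝ u z z with hF
  set Fa : E → ℝ := fun z => w z * u z ^ p * |fderiv ℝ u z z| with hFa
  set G : E → ℝ := fun z => w z * u z ^ (p + 1) with hG
  set g : E → ℝ := U.indicator F with hg
  set ga : E → ℝ := U.indicator Fa with hga
  set f : E → ℝ := U.indicator G with hf
  set I : ℝ := ∫ x in U, F x ∂μ with hI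
  set K : ℝ := ∫ x in U, Fa x ∂μ with hK
  set J : ℝ := ∫ x in U, G x ∂μ with hJ
  have hcu : ContinuousOn u U := hureg.continuousOn
  have hfd : ContinuousOn (fderiv ℝ u) U :=
    hureg.continuousOn_fderiv_of_isOpen hUo le_rfl
  have hFmeas : AEStronglyMeasurable F (μ.restrict U) :=
    (hwm.aestronglyMeasurable.mul
      ((hcu.rpow_const fun x _ => Or.inr hp.le).aestronglyMeasurable hUm)).mul
      ((hfd.clm_apply continuousOn_id).aestronglyMeasurable hUm)
  have habs : ∀ᵐ z ∂(μ.restrict U), ‖F z‖ = Fa z := by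
    filter_upwards [ae_restrict_mem hUm] with z hz
    simp only [hF, hFa, Real.norm_eq_abs, abs_mul,
      abs_of_nonneg (hw0 z), abs_of_nonneg (Real.rpow_nonneg (hu0 z hz) p), abs_abs]
  have hIntF : IntegrableOn F U μ := by
    refine hint2.mono' hFmeas ?_
    filter_upwards [habs] with z hz using le_of_eq hz
  have hg_int : Integrable g μ := (integrable_indicator_iff hUm).2 hIntF
  have hf_int : Integrable f μ := (integrable_indicator_iff hUm).2 hint1
  have hIg : ∫ x, g x ∂μ = I := integral_indicator hUm
  have hKg : ∫ x, ga x ∂μ = K := integral_indicator hUm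
  have hJg : ∫ x, f x ∂μ = J := integral_indicator hUm
  -- pointwise scaling identities
  have hpow1 : ∀ {s : ℝ}, 0 < s → s ^ (α - 1) * s ^ (-α) * s = 1 := by
    intro s hs
    rw [← Real.rpow_add hs, show α - 1 + -α = -1 by ring, Real.rpow_neg_one]
    field_simp
  have hpow2 : ∀ {s : ℝ}, 0 < s → s ^ α * s ^ (-α) = 1 := by
    intro s hs
    rw [← Real.rpow_add hs, show α + -α = 0 by ring, Real.rpow_zero]
  have hgs : ∀ {s : ℝ}, 0 < s → ∀ x : E,
      U.indicator (fun z => w z * (fderiv ℝ u (s • z) z * (p + 1) * u (s • z) ^ p)) x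
        = ((p + 1) * s ^ (α - 1)) * g (s • x) := by
    intro s hs x
    by_cases hx : x ∈ U
    · have hsx : s • x ∈ U := (hUiff s hs x).2 hx
      rw [indicator_of_mem hx, hg, indicator_of_mem hsx]
      have hlin : fderiv ℝ u (s • x) (s • x) = s * fderiv ℝ u (s • x) x := by
        rw [ContinuousLinearMap.map_smul, smul_eq_mul]
      simp only [hF]
      rw [hw s hs x, hlin]
      have h1 := hpow1 hs
      linear_combination
        (-(p + 1) * w x * u (s • x) ^ p * fderiv ℝ u (s • x) x) * h1
    · have hsx : s • x ∉ U := fun h => hx ((hUiff s hs x).1 h)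
      rw [indicator_of_notMem hx, hg, indicator_of_notMem hsx, mul_zero]
  have hgas : ∀ {s : ℝ}, 0 < s → ∀ x : E,
      U.indicator (fun z => w z * ((p + 1) * u (s • z) ^ p * |fderiv ℝ u (s • z) z|)) x
        = ((p + 1) * s ^ (α - 1)) * ga (s • x) := by
    intro s hs x
    by_cases hx : x ∈ U
    · have hsx : s • x ∈ U := (hUiff s hs x).2 hx
      rw [indicator_of_mem hx, hga, indicator_of_mem hsx]
      have hlin : |fderiv ℝ u (s • x) (s • x)| = s * |fderiv ℝ u (s • x) x| := by
        rw [ContinuousLinearMap.map_smul, smul_eq_mul, abs_mul, abs_of_pos hs]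
      simp only [hFa]
      rw [hw s hs x, hlin]
      have h1 := hpow1 hs
      linear_combination
        (-(p + 1) * w x * u (s • x) ^ p * |fderiv ℝ u (s • x) x|) * h1
    · have hsx : s • x ∉ U := fun h => hx ((hUiff s hs x).1 h)
      rw [indicator_of_notMem hx, hga, indicator_of_notMem hsx, mul_zero]
  have hfs : ∀ {s : ℝ}, 0 < s → ∀ x : E,
      U.indicator (fun z => w z * u (s • z) ^ (p + 1)) x = s ^ α * f (s • x) := by
    intro s hs x
    by_cases hx : x ∈ U
    · have hsx : s • x ∈ U := (hUiff s hs x).2 hx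
      rw [indicator_of_mem hx, hf, indicator_of_mem hsx]
      simp only [hG]
      rw [hw s hs x]
      have h2 := hpow2 hs
      linear_combination (-(w x) * u (s • x) ^ (p + 1)) * h2
    · have hsx : s • x ∉ U := fun h => hx ((hUiff s hs x).1 h)
      rw [indicator_of_notMem hx, hf, indicator_of_notMem hsx, mul_zero]
  -- integral scaling identities
  have hcomp : ∀ (h : E → ℝ) {s : ℝ}, 0 < s →
      ∫ x, h (s • x) ∂μ = s ^ (-d) * ∫ x, h x ∂μ := by
    intro h s hs
    rw [integral_comp_smul_pos μ h hs, ← hd]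
  have hGs : ∀ {s : ℝ}, 0 < s →
      ∫ x in U, w x * (fderiv ℝ u (s • x) x * (p + 1) * u (s • x) ^ p) ∂μ
        = (p + 1) * s ^ (α - 1 - d) * I := by
    intro s hs
    rw [← integral_indicator hUm]
    calc ∫ x, U.indicator
          (fun z => w z * (fderiv ℝ u (s • z) z * (p + 1) * u (s • z) ^ p)) x ∂μ
        = ∫ x, ((p + 1) * s ^ (α - 1)) * g (s • x) ∂μ := by
          congr 1; funext x; exact hgs hs x
      _ = ((p + 1) * s ^ (α - 1)) * ∫ x, g (s • x) ∂μ := integral_const_mul _ _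
      _ = ((p + 1) * s ^ (α - 1)) * (s ^ (-d) * I) := by rw [hcomp g hs, hIg]
      _ = (p + 1) * s ^ (α - 1 - d) * I := by
          rw [show α - 1 - d = (α - 1) + -d by ring, Real.rpow_add hs]; ring
  have hKs : ∀ {s : ℝ}, 0 < s →
      ∫ x in U, w x * ((p + 1) * u (s • x) ^ p * |fderiv ℝ u (s • x) x|) ∂μ
        = (p + 1) * s ^ (α - 1 - d) * K := by
    intro s hs
    rw [← integral_indicator hUm]
    calc ∫ x, U.indicator
          (fun z => w z * ((p + 1) * u (s • z) ^ p * |fderiv ℝ u (s • z) z|)) x ∂μ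
        = ∫ x, ((p + 1) * s ^ (α - 1)) * ga (s • x) ∂μ := by
          congr 1; funext x; exact hgas hs x
      _ = ((p + 1) * s ^ (α - 1)) * ∫ x, ga (s • x) ∂μ := integral_const_mul _ _
      _ = ((p + 1) * s ^ (α - 1)) * (s ^ (-d) * K) := by rw [hcomp ga hs, hKg]
      _ = (p + 1) * s ^ (α - 1 - d) * K := by
          rw [show α - 1 - d = (α - 1) + -d by ring, Real.rpow_add hs]; ring
  have hFs : ∀ {s : ℝ}, 0 < s →
      ∫ x in U, w x * u (s • x) ^ (p + 1) ∂μ = s ^ (α - d) * J := by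
    intro s hs
    rw [← integral_indicator hUm]
    calc ∫ x, U.indicator (fun z => w z * u (s • z) ^ (p + 1)) x ∂μ
        = ∫ x, s ^ α * f (s • x) ∂μ := by congr 1; funext x; exact hfs hs x
      _ = s ^ α * ∫ x, f (s • x) ∂μ := integral_const_mul _ _
      _ = s ^ α * (s ^ (-d) * J) := by rw [hcomp f hs, hJg]
      _ = s ^ (α - d) * J := by
          rw [show α - d = α + -d by ring, Real.rpow_add hs]; ring
  -- integrability of the scaled integrands
  have hGint : ∀ {s : ℝ}, 0 < s →
      IntegrableOn (fun x => w x * (fderiv ℝ u (s • x) x * (p + 1) * u (s • x) ^ p)) U μ := by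
    intro s hs
    rw [← integrable_indicator_iff hUm]
    have heq : U.indicator (fun x => w x * (fderiv ℝ u (s • x) x * (p + 1) * u (s • x) ^ p))
        = fun x => ((p + 1) * s ^ (α - 1)) * g (s • x) := funext (hgs hs)
    rw [heq]
    exact (hg_int.comp_smul hs.ne').const_mul _
  have hF2int : IntegrableOn (fun x => w x * u ((2 : ℝ) • x) ^ (p + 1)) U μ := by
    rw [← integrable_indicator_iff hUm]
    have heq : U.indicator (fun x => w x * u ((2 : ℝ) • x) ^ (p + 1))
        = fun x => (2 : ℝ) ^ α * f ((2 : ℝ) • x) := funext (hfs two_pos)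
    rw [heq]
    exact (hf_int.comp_smul (two_ne_zero)).const_mul _
  -- FTC along rays
  have hFTC : ∀ x ∈ U,
      u ((2 : ℝ) • x) ^ (p + 1) - u x ^ (p + 1)
        = ∫ s in (1 : ℝ)..2, fderiv ℝ u (s • x) x * (p + 1) * u (s • x) ^ p := by
    intro x hx
    have hmem : ∀ s : ℝ, 0 < s → s • x ∈ U := fun s hs => (hUiff s hs x).2 hx
    have hder : ∀ s ∈ uIcc (1 : ℝ) 2,
        HasDerivAt (fun t : ℝ => u (t • x) ^ (p + 1))
          (fderiv ℝ u (s • x) x * (p + 1) * u (s • x) ^ p) s := by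
      intro s hs
      rw [uIcc_of_le (by norm_num : (1 : ℝ) ≤ 2)] at hs
      have hs0 : (0 : ℝ) < s := by linarith [hs.1]
      have h1 : HasDerivAt (fun t : ℝ => t • x) x s := by
        simpa using (hasDerivAt_id s).smul_const x
      have h2 : HasDerivAt (fun t : ℝ => u (t • x)) (fderiv ℝ u (s • x) x) s :=
        (hud _ (hmem s hs0)).hasFDerivAt.comp_hasDerivAt s h1
      have h3 := h2.rpow_const (p := p + 1) (Or.inr (by linarith))
      simpa [show p + 1 - 1 = p by ring] using h3
    have hmapsto : MapsTo (fun s : ℝ => s • x) (uIcc (1 : ℝ) 2) U := by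
      intro s hs
      rw [uIcc_of_le (by norm_num : (1 : ℝ) ≤ 2)] at hs
      exact hmem s (by linarith [hs.1])
    have c0 : Continuous (fun s : ℝ => s • x) := continuous_id.smul continuous_const
    have hcont : ContinuousOn
        (fun s : ℝ => fderiv ℝ u (s • x) x * (p + 1) * u (s • x) ^ p) (uIcc (1 : ℝ) 2) := by
      have A : ContinuousOn (fun s : ℝ => fderiv ℝ u (s • x) x) (uIcc (1 : ℝ) 2) :=
        (hfd.comp c0.continuousOn hmapsto).clm_apply continuousOn_const
      have B : ContinuousOn (fun s : ℝ => u (s • x) ^ p) (uIcc (1 : ℝ) 2) :=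
        (hcu.comp c0.continuousOn hmapsto).rpow_const fun s _ => Or.inr hp.le
      exact (A.mul continuousOn_const).mul B
    have hfin := intervalIntegral.integral_eq_sub_of_hasDerivAt hder hcont.intervalIntegrable
    rw [hfin]
    norm_num
  -- product integrability for Fubini
  have hprodmeas : AEStronglyMeasurable
      (Function.uncurry fun (s : ℝ) (x : E) =>
        w x * (fderiv ℝ u (s • x) x * (p + 1) * u (s • x) ^ p))
      ((volume.restrict (Ioc (1 : ℝ) 2)).prod (μ.restrict U)) := by
    have heq : (volume.restrict (Ioc (1 : ℝ) 2)).prod (μ.restrict U)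
        = (volume.prod μ).restrict (Ioc (1 : ℝ) 2 ×ˢ U) := Measure.prod_restrict _ _
    rw [heq]
    have hle : (volume.prod μ).restrict (Ioc (1 : ℝ) 2 ×ˢ U)
        ≤ (volume.prod μ).restrict (Icc (1 : ℝ) 2 ×ˢ U) :=
      Measure.restrict_mono (prod_mono_left Ioc_subset_Icc_self) le_rfl
    refine AEStronglyMeasurable.mono_measure ?_ hle
    have hS : MeasurableSet (Icc (1 : ℝ) 2 ×ˢ U) := measurableSet_Icc.prod hUm
    have hsm : ContinuousOn (fun q : ℝ × E => q.1 • q.2) (Icc (1 : ℝ) 2 ×ˢ U) :=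
      (continuous_fst.smul continuous_snd).continuousOn
    have hmaps : MapsTo (fun q : ℝ × E => q.1 • q.2) (Icc (1 : ℝ) 2 ×ˢ U) U := by
      rintro ⟨s, x⟩ hq
      have hs1 : (1 : ℝ) ≤ s := hq.1.1
      exact (hUiff s (by linarith) x).2 hq.2
    have A : ContinuousOn (fun q : ℝ × E => fderiv ℝ u (q.1 • q.2) q.2)
        (Icc (1 : ℝ) 2 ×ˢ U) :=
      (hfd.comp hsm hmaps).clm_apply continuous_snd.continuousOn
    have B : ContinuousOn (fun q : ℝ × E => u (q.1 • q.2) ^ p) (Icc (1 : ℝ) 2 ×ˢ U) :=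
      (hcu.comp hsm hmaps).rpow_const fun q _ => Or.inr hp.le
    have C : ContinuousOn (fun q : ℝ × E =>
        fderiv ℝ u (q.1 • q.2) q.2 * (p + 1) * u (q.1 • q.2) ^ p) (Icc (1 : ℝ) 2 ×ˢ U) :=
      (A.mul continuousOn_const).mul B
    have hwq : AEStronglyMeasurable (fun q : ℝ × E => w q.2)
        ((volume.prod μ).restrict (Icc (1 : ℝ) 2 ×ˢ U)) :=
      (hwm.comp measurable_snd).aestronglyMeasurable
    exact hwq.mul (C.aestronglyMeasurable hS)
  have hprod : Integrable
      (Function.uncurry fun (s : ℝ) (x : E) =>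
        w x * (fderiv ℝ u (s • x) x * (p + 1) * u (s • x) ^ p))
      ((volume.restrict (Ioc (1 : ℝ) 2)).prod (μ.restrict U)) := by
    refine (integrable_prod_iff hprodmeas).2 ⟨?_, ?_⟩
    · filter_upwards [ae_restrict_mem measurableSet_Ioc] with s hs
      exact hGint (lt_trans zero_lt_one hs.1)
    · have hexp : ∀ s ∈ Ioc (1 : ℝ) 2,
          (∫ x, ‖w x * (fderiv ℝ u (s • x) x * (p + 1) * u (s • x) ^ p)‖ ∂(μ.restrict U))
            = (p + 1) * s ^ (α - 1 - d) * K := by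
        intro s hs
        have hs0 : (0 : ℝ) < s := lt_trans zero_lt_one hs.1
        have hae : ∀ᵐ x ∂(μ.restrict U),
            ‖w x * (fderiv ℝ u (s • x) x * (p + 1) * u (s • x) ^ p)‖
              = w x * ((p + 1) * u (s • x) ^ p * |fderiv ℝ u (s • x) x|) := by
          filter_upwards [ae_restrict_mem hUm] with x hx
          have h1 : (0 : ℝ) ≤ u (s • x) ^ p :=
            Real.rpow_nonneg (hu0 _ ((hUiff s hs0 x).2 hx)) p
          rw [Real.norm_eq_abs, abs_mul, abs_of_nonneg (hw0 x), abs_mul, abs_mul,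
            abs_of_nonneg h1, abs_of_nonneg (by linarith : (0 : ℝ) ≤ p + 1)]
          ring
        rw [integral_congr_ae hae]
        exact hKs hs0
      have hexpint : Integrable (fun s : ℝ => (p + 1) * s ^ (α - 1 - d) * K)
          (volume.restrict (Ioc (1 : ℝ) 2)) := by
        have hco : ContinuousOn (fun s : ℝ => (p + 1) * s ^ (α - 1 - d) * K)
            (Icc (1 : ℝ) 2) := by
          refine ((continuousOn_const.mul ?_).mul continuousOn_const)
          exact continuousOn_id.rpow_const fun x hx =>
            Or.inl (ne_of_gt (lt_of_lt_of_le zero_lt_one hx.1))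
        exact (hco.integrableOn_compact isCompact_Icc).mono_set Ioc_subset_Icc_self
      refine hexpint.congr ?_
      filter_upwards [ae_restrict_mem measurableSet_Ioc] with s hs
      exact (hexp s hs).symm
  -- the main chain of equalities
  have step1 : (2 : ℝ) ^ (α - d) * J - J
      = ∫ x in U, (w x * u ((2 : ℝ) • x) ^ (p + 1) - w x * u x ^ (p + 1)) ∂μ := by
    rw [integral_sub hF2int hint1, hFs two_pos]
  have step2 : ∫ x in U, (w x * u ((2 : ℝ) • x) ^ (p + 1) - w x * u x ^ (p + 1)) ∂μ
      = ∫ x in U, (∫ s in Ioc (1 : ℝ) 2,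
          w x * (fderiv ℝ u (s • x) x * (p + 1) * u (s • x) ^ p)) ∂μ := by
    refine integral_congr_ae ?_
    filter_upwards [ae_restrict_mem hUm] with x hx
    rw [← intervalIntegral.integral_of_le one_le_two,
      intervalIntegral.integral_const_mul, ← hFTC x hx]
    ring
  have step3 : ∫ x in U, (∫ s in Ioc (1 : ℝ) 2,
        w x * (fderiv ℝ u (s • x) x * (p + 1) * u (s • x) ^ p)) ∂μ
      = ∫ s in Ioc (1 : ℝ) 2,
          (∫ x in U, w x * (fderiv ℝ u (s • x) x * (p + 1) * u (s • x) ^ p) ∂μ) :=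
    (integral_integral_swap hprod).symm
  have step4 : (∫ s in Ioc (1 : ℝ) 2,
        (∫ x in U, w x * (fderiv ℝ u (s • x) x * (p + 1) * u (s • x) ^ p) ∂μ))
      = (p + 1) * I * (((2 : ℝ) ^ (α - d) - 1) / (α - d)) := by
    have hae : ∀ᵐ s ∂(volume.restrict (Ioc (1 : ℝ) 2)),
        (∫ x in U, w x * (fderiv ℝ u (s • x) x * (p + 1) * u (s • x) ^ p) ∂μ)
          = ((p + 1) * I) * s ^ (α - 1 - d) := by
      filter_upwards [ae_restrict_mem measurableSet_Ioc] with s hs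
      rw [hGs (lt_trans zero_lt_one hs.1)]; ring
    rw [integral_congr_ae hae, ← intervalIntegral.integral_of_le one_le_two,
      intervalIntegral.integral_const_mul]
    have hne : α - 1 - d ≠ -1 := by
      intro h; exact hαd (by linarith [h])
    have hnm : (0 : ℝ) ∉ uIcc (1 : ℝ) 2 := by
      rw [uIcc_of_le (by norm_num : (1 : ℝ) ≤ 2)]
      intro h; exact absurd h.1 (by norm_num)
    rw [integral_rpow (Or.inr ⟨hne, hnm⟩), Real.one_rpow,
      show α - 1 - d + 1 = α - d by ring]
  have hkey : ((2 : ℝ) ^ (α - d) - 1) * J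
      = (p + 1) * I * (((2 : ℝ) ^ (α - d) - 1) / (α - d)) := by
    have h := step1.trans (step2.trans (step3.trans step4))
    linarith [h]
  have h2lt : (2 : ℝ) ^ (α - d) < 1 :=
    Real.rpow_lt_one_of_one_lt_of_neg one_lt_two (by linarith)
  have h2ne : (2 : ℝ) ^ (α - d) - 1 ≠ 0 := ne_of_lt (by linarith)
  have hkey' : J * ((2 : ℝ) ^ (α - d) - 1)
      = ((p + 1) * I / (α - d)) * ((2 : ℝ) ^ (α - d) - 1) := by
    linear_combination hkey
  have hJI : J = (p + 1) * I / (α - d) := mul_right_cancel₀ h2ne hkey'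
  rw [hJI]
  field_simp

end Generic


lemma hnorm_smul_aux {n : ℕ} {s : ℝ} (hs : 0 ≤ s) (x : EuclideanSpace ℝ (Fin (n-1)) × ℝ) :
    Real.sqrt (‖(s • x).1‖ ^ 2 + (s • x).2 ^ 2) = s * Real.sqrt (‖x.1‖ ^ 2 + x.2 ^ 2) := by
  have h1 : ((s • x).1) = s • x.1 := rfl
  have h2 : ((s • x).2) = s * x.2 := rfl
  rw [h1, h2, norm_smul, Real.norm_eq_abs]
  have h3 : (|s| * ‖x.1‖) ^ 2 + (s * x.2) ^ 2 = s ^ 2 * (‖x.1‖ ^ 2 + x.2 ^ 2) := by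
    rw [mul_pow, sq_abs]; ring
  rw [h3, Real.sqrt_mul (sq_nonneg s), Real.sqrt_sq hs]


/-- The boundary of the upper half space `ℝⁿ₊`, identified with `ℝ^{n-1}`. -/
abbrev Bdy (n : ℕ) : Type := EuclideanSpace ℝ (Fin (n - 1))

/-- The ambient space `ℝ^{n-1} × ℝ`; the upper half space is the set where the
last coordinate is positive. -/
abbrev Half (n : ℕ) : Type := Bdy n × ℝ

/-- The (open) upper half space `ℝⁿ₊`. -/
def upperHalf (n : ℕ) : Set (Half n) := {x | 0 < x.2}

/-- The Euclidean norm `|x| = √(|x'|² + xₙ²)` of a point of the half space. -/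
def hnorm {n : ℕ} (x : Half n) : ℝ := Real.sqrt (‖x.1‖ ^ 2 + x.2 ^ 2)

/-- The kernel `P_λ(x, y, μ) = xₙ^λ / (|x' − y|² + xₙ²)^{μ/2}`. -/
def Pker {n : ℕ} (lam mu : ℝ) (x : Half n) (y : Bdy n) : ℝ :=
  x.2 ^ lam / (‖x.1 - y‖ ^ 2 + x.2 ^ 2) ^ (mu / 2)

/-- The key integration-by-parts identity in the proof of the Pohozaev-type necessary
condition: the weighted integrals of `u^{p₀} (y·∇u)` and `v^{q₀} (x·∇v)` are expressed in
terms of the weighted `L^{p₀+1}` and `L^{q₀+1}` norms of `u` and `v`. -/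
theorem pohozaev_radial_identity
    (n : ℕ) (hn : 3 ≤ n) (lam mu α β p₀ q₀ : ℝ)
    (hlam : 0 ≤ lam) (hmu0 : 0 < mu) (hmu : mu < (n : ℝ) - 2 * lam)
    (hp₀ : 0 < p₀) (hq₀ : 0 < q₀)
    (hα : α < (n : ℝ) - 1) (hβ : β < (n : ℝ))
    (u : Bdy n → ℝ) (v : Half n → ℝ)
    (hu0 : ∀ y : Bdy n, 0 ≤ u y)
    (hv0 : ∀ x ∈ upperHalf n, 0 ≤ v x)
    (hureg : ContDiff ℝ 1 u)
    (hvreg : ContDiffOn ℝ 1 v (upperHalf n))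
    (hvdiff : ∀ x ∈ upperHalf n, DifferentiableAt ℝ v x)
    (hu : ∀ y : Bdy n,
      u y = ∫ x in upperHalf n, (hnorm x) ^ (-β) * Pker lam mu x y * v x ^ q₀)
    (hv : ∀ x ∈ upperHalf n,
      v x = ∫ y : Bdy n, ‖y‖ ^ (-α) * Pker lam mu x y * u y ^ p₀)
    (huint : Integrable (fun y : Bdy n => ‖y‖ ^ (-α) * u y ^ (p₀ + 1))
      (volume : Measure (Bdy n)))
    (hvint : IntegrableOn (fun x : Half n => (hnorm x) ^ (-β) * v x ^ (q₀ + 1))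
      (upperHalf n) volume)
    (huint' : Integrable (fun y : Bdy n => ‖y‖ ^ (-α) * u y ^ p₀ * |fderiv ℝ u y y|)
      (volume : Measure (Bdy n)))
    (hvint' : IntegrableOn (fun x : Half n => (hnorm x) ^ (-β) * v x ^ q₀ * |fderiv ℝ v x x|)
      (upperHalf n) volume) :
    (∫ y : Bdy n, ‖y‖ ^ (-α) * u y ^ p₀ * fderiv ℝ u y y) +
      (∫ x in upperHalf n, (hnorm x) ^ (-β) * v x ^ q₀ * fderiv ℝ v x x) =
    -(((n : ℝ) - 1 - α) / (p₀ + 1)) * (∫ y : Bdy n, ‖y‖ ^ (-α) * u y ^ (p₀ + 1)) -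
      (((n : ℝ) - β) / (q₀ + 1)) * (∫ x in upperHalf n, (hnorm x) ^ (-β) * v x ^ (q₀ + 1)) := by
  have hn1 : ((n - 1 : ℕ) : ℝ) = (n : ℝ) - 1 := by
    rw [Nat.cast_sub (by omega : (1:ℕ) ≤ n), Nat.cast_one]
  -- Part 1 : the boundary integral
  have hα' : α < (finrank ℝ (Bdy n) : ℝ) := by
    rw [finrank_euclideanSpace_fin, hn1]; exact hα
  have part1 : (∫ y : Bdy n, ‖y‖ ^ (-α) * u y ^ p₀ * fderiv ℝ u y y)
      = ((α - ((n : ℝ) - 1)) / (p₀ + 1)) * ∫ y : Bdy n, ‖y‖ ^ (-α) * u y ^ (p₀ + 1) := by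
    have key := pohozaev_one (volume : Measure (Bdy n)) hα' hp₀
      (fun y => ‖y‖ ^ (-α)) ((rpow_const_measurable (-α)).comp measurable_norm)
      (fun y => Real.rpow_nonneg (norm_nonneg y) _)
      (fun s hs y => by
        rw [norm_smul, Real.norm_eq_abs, abs_of_pos hs,
          Real.mul_rpow hs.le (norm_nonneg y)])
      univ isOpen_univ (fun s hs x => by simp) u (fun y _ => hu0 y)
      hureg.contDiffOn (fun y _ => hureg.differentiable one_ne_zero y)
      (integrableOn_univ.2 huint) (integrableOn_univ.2 huint')
    rw [Measure.restrict_univ, finrank_euclideanSpace_fin, hn1] at key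
    exact key
  -- Part 2 : the half space integral
  haveI : (volume : Measure (Half n)).IsAddHaarMeasure :=
    Measure.prod.instIsAddHaarMeasure volume volume
  have hfr : (finrank ℝ (Half n) : ℝ) = (n : ℝ) := by
    rw [Module.finrank_prod, finrank_euclideanSpace_fin, Module.finrank_self,
      Nat.cast_add, hn1, Nat.cast_one]
    ring
  have hβ' : β < (finrank ℝ (Half n) : ℝ) := by rw [hfr]; exact hβ
  have hhc : Continuous (fun x : Half n => hnorm x) := by
    unfold hnorm
    exact Real.continuous_sqrt.comp
      (((continuous_norm.comp continuous_fst).pow 2).add (continuous_snd.pow 2))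
  have part2 : (∫ x in upperHalf n, (hnorm x) ^ (-β) * v x ^ q₀ * fderiv ℝ v x x)
      = ((β - (n : ℝ)) / (q₀ + 1))
          * ∫ x in upperHalf n, (hnorm x) ^ (-β) * v x ^ (q₀ + 1) := by
    have key := pohozaev_one (volume : Measure (Half n)) hβ' hq₀
      (fun x => (hnorm x) ^ (-β))
      ((rpow_const_measurable (-β)).comp hhc.measurable)
      (fun x => Real.rpow_nonneg (Real.sqrt_nonneg _) _)
      (fun s hs x => by
        unfold hnorm
        rw [hnorm_smul_aux hs.le x,
          Real.mul_rpow hs.le (Real.sqrt_nonneg _)])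
      (upperHalf n)
      (isOpen_Ioi.preimage continuous_snd)
      (fun s hs x => by
        simp only [upperHalf, mem_setOf_eq, Prod.smul_snd, smul_eq_mul]
        exact ⟨fun h => by nlinarith, fun h => mul_pos hs h⟩)
      v hv0 hvreg hvdiff hvint hvint'
    rw [hfr] at key
    exact key
  rw [part1, part2]
  ring
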